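/- arXiv:1403.8144 — 6 statements merged into one kernel-verified Lean document; each statement's English description precedes it below -/
import Mathlib

section
/- Let (X, Y) be jointly bivariate normal with mean zero, unit variances, and correlation ρ ∈ [0,1). For w > 0, the collision probability P_w = P(⌊X/w⌋ = ⌊Y/w⌋) satisfies P_w = 2 ∑_{i=0}^∞ ∫_{iw}^{(i+1)w} φ(z) [Φ(((i+1)w - ρz)/√(1-ρ²)) - Φ((iw - ρz)/√(1-ρ²))] dz, where φ and Φ are the standard normal pdf and cdf. -/
/-!
Write the pair as `(X, ρ X + s Z)` with `X, Z` independent standard normals and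
`s = √(1 - ρ²)`. For `X = x` in the bin `[i w, (i + 1) w)`, the two codes agree exactly when
`Z ∈ [(i w - ρ x) / s, ((i + 1) w - ρ x) / s)`, an event of probability
`Φ(((i + 1) w - ρ x) / s) - Φ((i w - ρ x) / s)`. Integrating over `x` bin by bin (Fubini)
gives a sum over `i ∈ ℤ`, and since `Φ(-t) = 1 - Φ(t)`, the reflection `x ↦ -x` carries
bin `i` onto bin `-i - 1` without changing its contribution.
-/

open MeasureTheory ProbabilityTheory Real Set

/-- Standard normal density. -/
noncomputable def stdPdf (x : ℝ) : ℝ := (Real.sqrt (2 * Real.pi))⁻¹ * Real.exp (-x ^ 2 / 2)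

/-- Standard normal CDF. -/
noncomputable def Phi (x : ℝ) : ℝ := ∫ t in Set.Iic x, stdPdf t

lemma gaussianPDFReal_zero_one : gaussianPDFReal 0 1 = stdPdf := by
  ext x
  simp [gaussianPDFReal, stdPdf]

lemma stdPdf_nonneg (x : ℝ) : 0 ≤ stdPdf x := by
  rw [← gaussianPDFReal_zero_one]
  exact gaussianPDFReal_nonneg 0 1 x

lemma stdPdf_neg (x : ℝ) : stdPdf (-x) = stdPdf x := by
  simp [stdPdf]

lemma integrable_stdPdf : Integrable stdPdf := by
  rw [← gaussianPDFReal_zero_one]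
  exact integrable_gaussianPDFReal 0 1

lemma integral_stdPdf : ∫ x, stdPdf x = 1 := by
  rw [← gaussianPDFReal_zero_one]
  exact integral_gaussianPDFReal_eq_one 0 one_ne_zero

lemma Phi_sub_Phi (a b : ℝ) : Phi b - Phi a = ∫ x in a..b, stdPdf x :=
  intervalIntegral.integral_Iic_sub_Iic integrable_stdPdf.integrableOn
    integrable_stdPdf.integrableOn

lemma Phi_neg (x : ℝ) : Phi (-x) = 1 - Phi x := by
  have h_tail : Phi (-x) = ∫ t in Ioi x, stdPdf t := by
    rw [Phi, ← integral_comp_neg_Ioi]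
    simp only [stdPdf_neg]
  have h_total : Phi x + ∫ t in Ioi x, stdPdf t = 1 := by
    rw [Phi, intervalIntegral.integral_Iic_add_Ioi integrable_stdPdf.integrableOn
      integrable_stdPdf.integrableOn, integral_stdPdf]
  linarith

lemma toReal_gaussianReal_Ico {a b : ℝ} (hab : a ≤ b) :
    (gaussianReal 0 1 (Ico a b)).toReal = Phi b - Phi a := by
  rw [gaussianReal_apply_eq_integral 0 one_ne_zero, gaussianPDFReal_zero_one, Phi_sub_Phi,
    intervalIntegral.integral_of_le hab, integral_Ioc_eq_integral_Ioo,
    integral_Ico_eq_integral_Ioo, ENNReal.toReal_ofReal]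
  exact setIntegral_nonneg measurableSet_Ioo fun x _ => stdPdf_nonneg x

lemma setIntegral_gaussianReal_Ico {a b : ℝ} (hab : a ≤ b) (f : ℝ → ℝ) :
    ∫ x in Ico a b, f x ∂gaussianReal 0 1 = ∫ x in a..b, stdPdf x * f x := by
  rw [gaussianReal_of_var_ne_zero 0 one_ne_zero,
    setIntegral_withDensity_eq_setIntegral_toReal_smul₀' _
      (measurable_gaussianPDF 0 1).aemeasurable (ae_of_all _ fun _ => gaussianPDF_lt_top),
    intervalIntegral.integral_of_le hab, integral_Ioc_eq_integral_Ioo,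
    integral_Ico_eq_integral_Ioo]
  simp only [toReal_gaussianPDF, gaussianPDFReal_zero_one, smul_eq_mul]

lemma toReal_prod_apply_eq_integral {α β : Type*} [MeasurableSpace α] [MeasurableSpace β]
    {μ : Measure α} {ν : Measure β} [IsFiniteMeasure ν] {A : Set (α × β)}
    (hA : MeasurableSet A) :
    (μ.prod ν A).toReal = ∫ x, (ν (Prod.mk x ⁻¹' A)).toReal ∂μ := by
  rw [Measure.prod_apply hA, integral_toReal (measurable_measure_prodMk_left hA).aemeasurable
    (ae_of_all _ fun _ => measure_lt_top _ _)]

lemma integrable_toReal_measure_prodMk_left {α β : Type*} [MeasurableSpace α]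
    [MeasurableSpace β] {μ : Measure α} {ν : Measure β} [IsFiniteMeasure μ] [IsFiniteMeasure ν]
    {A : Set (α × β)} (hA : MeasurableSet A) :
    Integrable (fun x => (ν (Prod.mk x ⁻¹' A)).toReal) μ :=
  integrable_toReal_of_lintegral_ne_top (measurable_measure_prodMk_left hA).aemeasurable
    (by rw [← Measure.prod_apply hA]; exact measure_ne_top _ _)

lemma hasSum_setIntegral_Ico_mul {E : Type*} [NormedAddCommGroup E] [NormedSpace ℝ E]
    {μ : Measure ℝ} {f : ℝ → E} (hf : Integrable f μ) {w : ℝ} (hw : 0 < w) :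
    HasSum (fun i : ℤ => ∫ x in Ico (i * w) ((i + 1) * w), f x ∂μ) (∫ x, f x ∂μ) := by
  have h := hasSum_integral_iUnion (fun _ => measurableSet_Ico)
    (pairwise_disjoint_Ico_zsmul w) (by rw [iUnion_Ico_zsmul hw]; exact hf.integrableOn)
  rw [iUnion_Ico_zsmul hw, Measure.restrict_univ] at h
  simpa only [zsmul_eq_mul, Int.cast_add, Int.cast_one] using h

lemma HasSum.eq_two_mul_tsum_of_neg_add_one {f : ℤ → ℝ} {a : ℝ} (hf : HasSum f a)
    (hf_symm : ∀ n : ℕ, f (-(n + 1)) = f n) : a = 2 * ∑' n : ℕ, f n := by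
  have h := hf.nat_add_neg_add_one
  simp only [hf_symm, ← two_mul] at h
  rw [← h.tsum_eq, tsum_mul_left]

lemma floor_div_eq_iff_mem_Ico {w : ℝ} (hw : 0 < w) {x : ℝ} {k : ℤ} :
    ⌊x / w⌋ = k ↔ x ∈ Ico (k * w) ((k + 1) * w) := by
  rw [Int.floor_eq_iff, le_div_iff₀ hw, div_lt_iff₀ hw, mem_Ico]

lemma floor_add_mul_div_eq_iff {w s : ℝ} (hw : 0 < w) (hs : 0 < s) {a y : ℝ} {k : ℤ} :
    ⌊(a + s * y) / w⌋ = k ↔ y ∈ Ico ((k * w - a) / s) (((k + 1) * w - a) / s) := by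
  rw [floor_div_eq_iff_mem_Ico hw, mem_Ico, mem_Ico, div_le_iff₀ hs, lt_div_iff₀ hs]
  constructor <;> rintro ⟨h1, h2⟩ <;> constructor <;> linarith

def collisionSet (ρ s w : ℝ) : Set (ℝ × ℝ) :=
  {p | ⌊p.1 / w⌋ = ⌊(ρ * p.1 + s * p.2) / w⌋}

noncomputable def binMass (ρ s c d : ℝ) : ℝ :=
  ∫ z in c..d, stdPdf z * (Phi ((d - ρ * z) / s) - Phi ((c - ρ * z) / s))

lemma binMass_neg_neg (ρ s c d : ℝ) : binMass ρ s (-d) (-c) = binMass ρ s c d := by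
  rw [binMass, binMass, ← intervalIntegral.integral_comp_neg]
  refine intervalIntegral.integral_congr fun x _ => ?_
  rw [stdPdf_neg, show -c - ρ * -x = -(c - ρ * x) by ring,
    show -d - ρ * -x = -(d - ρ * x) by ring, neg_div, neg_div, Phi_neg, Phi_neg]
  ring

section

variable {ρ s w : ℝ}

lemma measurableSet_collisionSet : MeasurableSet (collisionSet ρ s w) :=
  measurableSet_eq_fun (measurable_fst.div_const w).floor
    (((measurable_fst.const_mul ρ).add (measurable_snd.const_mul s)).div_const w).floor

lemma preimage_prodMk_collisionSet (hw : 0 < w) (hs : 0 < s) (x : ℝ) :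
    Prod.mk x ⁻¹' collisionSet ρ s w =
      Ico ((⌊x / w⌋ * w - ρ * x) / s) (((⌊x / w⌋ + 1) * w - ρ * x) / s) := by
  ext y
  exact eq_comm.trans (floor_add_mul_div_eq_iff hw hs)

lemma setIntegral_Ico_collisionSet (hw : 0 < w) (hs : 0 < s) (i : ℤ) :
    ∫ x in Ico (i * w) ((i + 1) * w),
        (gaussianReal 0 1 (Prod.mk x ⁻¹' collisionSet ρ s w)).toReal ∂gaussianReal 0 1 =
      binMass ρ s (i * w) ((i + 1) * w) := by
  have hbin : (i : ℝ) * w ≤ (i + 1) * w := by nlinarith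
  have hslice : ∀ x ∈ Ico (i * w) ((i + 1) * w),
      (gaussianReal 0 1 (Prod.mk x ⁻¹' collisionSet ρ s w)).toReal =
        Phi (((i + 1) * w - ρ * x) / s) - Phi ((i * w - ρ * x) / s) := fun x hx => by
    rw [preimage_prodMk_collisionSet hw hs, (floor_div_eq_iff_mem_Ico hw).2 hx,
      toReal_gaussianReal_Ico (by gcongr)]
  rw [setIntegral_congr_fun measurableSet_Ico hslice, setIntegral_gaussianReal_Ico hbin, binMass]

end

/-- Collision probability of uniform quantization for a standard bivariate normal pair
with correlation ρ ∈ [0,1). -/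
theorem stmt1 (ρ : ℝ) (hρ : ρ ∈ Set.Ico (0 : ℝ) 1) (w : ℝ) (hw : 0 < w) :
    (((gaussianReal 0 1).prod (gaussianReal 0 1))
        {p : ℝ × ℝ | ⌊p.1 / w⌋ = ⌊(ρ * p.1 + Real.sqrt (1 - ρ ^ 2) * p.2) / w⌋}).toReal
      = 2 * ∑' i : ℕ, ∫ z in Set.Ioc ((i : ℝ) * w) (((i : ℝ) + 1) * w),
          stdPdf z * (Phi ((((i : ℝ) + 1) * w - ρ * z) / Real.sqrt (1 - ρ ^ 2))
            - Phi (((i : ℝ) * w - ρ * z) / Real.sqrt (1 - ρ ^ 2))) := by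
  have hs : 0 < √(1 - ρ ^ 2) := Real.sqrt_pos.2 (by nlinarith [hρ.1, hρ.2])
  have hA : MeasurableSet (collisionSet ρ √(1 - ρ ^ 2) w) := measurableSet_collisionSet
  have hbins := hasSum_setIntegral_Ico_mul
    (integrable_toReal_measure_prodMk_left (μ := gaussianReal 0 1) (ν := gaussianReal 0 1) hA) hw
  simp only [setIntegral_Ico_collisionSet hw hs] at hbins
  change ((gaussianReal 0 1).prod (gaussianReal 0 1) (collisionSet ρ _ w)).toReal = _
  rw [toReal_prod_apply_eq_integral hA, hbins.eq_two_mul_tsum_of_neg_add_one fun n => ?_]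
  · congr 1
    refine tsum_congr fun n => ?_
    rw [binMass, intervalIntegral.integral_of_le (by nlinarith)]
    simp only [Int.cast_natCast]
  · rw [← binMass_neg_neg]
    congr 1 <;> push_cast <;> ring
end

section
/- Let d > 0 and w > 0, and let T be a random variable distributed as |√d · Z| where Z is standard normal. Let Q ~ Uniform(0, w) be independent of T. Then P(⌊(X+Q)/w⌋ = ⌊(Y+Q)/w⌋), where X - Y = √d Z, equals ∫_0^w (2/√d) φ(t/√d) (1 - t/w) dt, where φ is the standard normal density. -/
open MeasureTheory ProbabilityTheory Real Set

/-! For two points `x, y`, the offsets `q` putting them in the same bin form a set invariant under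
translation by `w`, so its measure over a period can be computed on `[-y, -y + w)`; there, for
`y ≤ x`, it is the interval `[-y, w - x)`, of length `(w - |x - y|)⁺`. Integrating
`(1 - |√d z| / w)⁺` against the standard Gaussian density and folding `z ↦ |z|` produces the
density `(2 / √d) φ(t / √d)` of `|√d Z|` on `(0, ∞)`, and the integrand vanishes for `t ≥ w`. -/

def sameBinOffsets (w x y : ℝ) : Set ℝ := {q | ⌊(x + q) / w⌋ = ⌊(y + q) / w⌋}

lemma sameBinOffsets_comm (w x y : ℝ) : sameBinOffsets w x y = sameBinOffsets w y x := by
  ext q; exact eq_comm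

lemma measurableSet_sameBinOffsets (w x y : ℝ) : MeasurableSet (sameBinOffsets w x y) :=
  measurableSet_eq_fun (by fun_prop) (by fun_prop)

lemma preimage_vadd_sameBinOffsets {w : ℝ} (hw : w ≠ 0) (x y : ℝ)
    (g : AddSubgroup.zmultiples w) :
    (fun q => g +ᵥ q) ⁻¹' sameBinOffsets w x y = sameBinOffsets w x y := by
  obtain ⟨_, n, rfl⟩ := g
  have shift (z q : ℝ) : ⌊(z + (n * w + q)) / w⌋ = ⌊(z + q) / w⌋ + n := by
    rw [← Int.floor_add_intCast]
    congr 1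
    field_simp
    ring
  ext q
  simp [sameBinOffsets, shift]

lemma sameBinOffsets_inter_Ico_of_le {w : ℝ} (hw : 0 < w) {x y : ℝ} (hyx : y ≤ x) :
    sameBinOffsets w x y ∩ Ico (-y) (-y + w) = Ico (-y) (w - x) := by
  have floor_eq_zero {z : ℝ} (hz : 0 ≤ z) : ⌊z / w⌋ = 0 ↔ z < w := by
    rw [Int.floor_eq_zero_iff, mem_Ico, div_lt_one hw]
    exact and_iff_right (div_nonneg hz hw.le)
  ext q
  simp only [sameBinOffsets, mem_inter_iff, mem_ofPred_eq, mem_Ico]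
  constructor
  · rintro ⟨hsame, hq, hqw⟩
    have hy : ⌊(y + q) / w⌋ = 0 := (floor_eq_zero (by linarith)).2 (by linarith)
    have hx : x + q < w := (floor_eq_zero (by linarith)).1 (hsame.trans hy)
    exact ⟨hq, by linarith⟩
  · rintro ⟨hq, hqw⟩
    refine ⟨?_, hq, by linarith⟩
    rw [(floor_eq_zero (by linarith)).2 (by linarith), (floor_eq_zero (by linarith)).2 (by linarith)]

lemma volume_sameBinOffsets_inter_Ico {w : ℝ} (hw : 0 < w) (x y : ℝ) :
    volume (sameBinOffsets w x y ∩ Ico 0 w) = ENNReal.ofReal (w - |x - y|) := by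
  wlog hyx : y ≤ x generalizing x y
  · rw [sameBinOffsets_comm, abs_sub_comm]
    exact this y x (le_of_not_ge hyx)
  have hfund := isAddFundamentalDomain_Ioc hw
  calc volume (sameBinOffsets w x y ∩ Ico 0 w)
      = volume (sameBinOffsets w x y ∩ Ioc 0 (0 + w)) := by
        rw [zero_add]; exact measure_congr ((ae_eq_refl _).inter Ico_ae_eq_Ioc)
    _ = volume (sameBinOffsets w x y ∩ Ioc (-y) (-y + w)) :=
        (hfund 0).measure_set_eq (hfund (-y)) (measurableSet_sameBinOffsets w x y)
          (preimage_vadd_sameBinOffsets hw.ne' x y)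
    _ = volume (sameBinOffsets w x y ∩ Ico (-y) (-y + w)) :=
        measure_congr ((ae_eq_refl _).inter Ico_ae_eq_Ioc.symm)
    _ = ENNReal.ofReal (w - |x - y|) := by
        rw [sameBinOffsets_inter_Ico_of_le hw hyx, Real.volume_Ico,
          abs_of_nonneg (sub_nonneg.2 hyx)]
        ring_nf

lemma uniform_sameBinOffsets {w : ℝ} (hw : 0 < w) (x y : ℝ) :
    ((ENNReal.ofReal w)⁻¹ • volume.restrict (Ioo 0 w)) (sameBinOffsets w x y)
      = ENNReal.ofReal (1 - |x - y| / w) := by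
  rw [Measure.smul_apply, Measure.restrict_congr_set Ioo_ae_eq_Ico,
    Measure.restrict_apply (measurableSet_sameBinOffsets w x y),
    volume_sameBinOffsets_inter_Ico hw, smul_eq_mul, ← ENNReal.ofReal_inv_of_pos hw,
    ← ENNReal.ofReal_mul (inv_nonneg.2 hw.le)]
  congr 1
  field_simp

lemma stdPdf_abs (x : ℝ) : stdPdf |x| = stdPdf x := by
  simp only [stdPdf, sq_abs]

lemma integral_gaussianReal_zero_one (f : ℝ → ℝ) :
    ∫ z, f z ∂gaussianReal 0 1 = ∫ z, stdPdf z * f z := by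
  rw [integral_gaussianReal_eq_integral_smul one_ne_zero]
  congr with z
  simp [gaussianPDFReal, stdPdf]

lemma integral_stdPdf_mul_comp_abs_mul {c : ℝ} (hc : 0 < c) (f : ℝ → ℝ) :
    ∫ z, stdPdf z * f |c * z| = ∫ t in Ioi 0, 2 / c * stdPdf (t / c) * f t := by
  have heven (z : ℝ) : stdPdf z * f |c * z| = stdPdf |z| * f (c * |z|) := by
    rw [stdPdf_abs, abs_mul, abs_of_pos hc]
  have hscale (u : ℝ) : stdPdf (c * u / c) * f (c * u) = stdPdf u * f (c * u) := by
    rw [mul_div_cancel_left₀ u hc.ne']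
  calc ∫ z, stdPdf z * f |c * z|
      = 2 * ∫ u in Ioi 0, stdPdf u * f (c * u) := by
        simp only [heven]
        exact integral_comp_abs (f := fun u => stdPdf u * f (c * u))
    _ = 2 * (c⁻¹ * ∫ t in Ioi 0, stdPdf (t / c) * f t) := by
        have hcov := integral_comp_mul_left_Ioi (fun t => stdPdf (t / c) * f t) 0 hc
        simp only [hscale, mul_zero, smul_eq_mul] at hcov
        rw [hcov]
    _ = ∫ t in Ioi 0, 2 / c * stdPdf (t / c) * f t := by
        simp only [mul_assoc, integral_const_mul]
        ring

lemma setIntegral_Ioi_mul_max_one_sub_div {w : ℝ} (hw : 0 < w) (g : ℝ → ℝ) :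
    ∫ t in Ioi 0, g t * max (1 - t / w) 0 = ∫ t in Ioc 0 w, g t * (1 - t / w) := by
  have hvanish : ∀ t ∈ Ioi 0 \ Ioc 0 w, g t * max (1 - t / w) 0 = 0 := by
    rintro t ⟨ht0, ht⟩
    have hwt : w < t := by
      simp only [mem_Ioc, not_and, not_le] at ht
      exact ht ht0
    rw [max_eq_right (sub_nonpos.2 ((one_le_div hw).2 hwt.le)), mul_zero]
  rw [setIntegral_eq_of_subset_of_forall_sdiff_eq_zero measurableSet_Ioi Ioc_subset_Ioi_self hvanish]
  refine setIntegral_congr_fun measurableSet_Ioc fun t ht => ?_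
  rw [max_eq_left (sub_nonneg.2 ((div_le_one hw).2 ht.2))]

/-- Collision probability of quantization with a uniform random offset, for two points
whose difference is √d Z with Z standard normal. -/
theorem stmt3 (d w : ℝ) (hd : 0 < d) (hw : 0 < w) (y₀ : ℝ) :
    (((gaussianReal 0 1).prod
        ((ENNReal.ofReal w)⁻¹ • volume.restrict (Set.Ioo (0 : ℝ) w)))
        {p : ℝ × ℝ | ⌊(y₀ + Real.sqrt d * p.1 + p.2) / w⌋ = ⌊(y₀ + p.2) / w⌋}).toReal
      = ∫ t in Set.Ioc (0 : ℝ) w,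
          (2 / Real.sqrt d) * stdPdf (t / Real.sqrt d) * (1 - t / w) := by
  set S := {p : ℝ × ℝ | ⌊(y₀ + Real.sqrt d * p.1 + p.2) / w⌋ = ⌊(y₀ + p.2) / w⌋}
  have hS : MeasurableSet S := measurableSet_eq_fun (by fun_prop) (by fun_prop)
  have hslice (z : ℝ) : ((ENNReal.ofReal w)⁻¹ • volume.restrict (Ioo 0 w)) (Prod.mk z ⁻¹' S)
      = ENNReal.ofReal (max (1 - |√d * z| / w) 0) := by
    rw [ENNReal.ofReal_max, ENNReal.ofReal_zero, max_eq_left zero_le,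
      ← add_sub_cancel_left y₀ (√d * z)]
    exact uniform_sameBinOffsets hw (y₀ + √d * z) y₀
  rw [Measure.prod_apply hS, lintegral_congr hslice,
    ← integral_eq_lintegral_of_nonneg_ae (f := fun z => max (1 - |√d * z| / w) 0)
      (.of_forall fun _ => le_max_right _ _) (by fun_prop),
    integral_gaussianReal_zero_one,
    integral_stdPdf_mul_comp_abs_mul (Real.sqrt_pos.2 hd) (fun t => max (1 - t / w) 0),
    setIntegral_Ioi_mul_max_one_sub_div hw]
end

section
/- Fix d > 0. The function w ↦ P_{w,q}(w) = ∫_0^w (2/√d) φ(t/√d)(1 - t/w) dt is strictly increasing in w on (0, ∞). -/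
open MeasureTheory ProbabilityTheory Real Set

/-! Enlarging the bin width from `w₁` to `w₂` raises the linear weight `1 - t / w` on `(0, w₁]`
and adds the interval `(w₁, w₂]`, on which the integrand is positive. -/

lemma stdPdf_pos (x : ℝ) : 0 < stdPdf x := by
  unfold stdPdf
  positivity

lemma continuous_stdPdf : Continuous stdPdf := by
  unfold stdPdf
  fun_prop

section

variable {g : ℝ → ℝ}

lemma MeasureTheory.IntegrableOn.mul_one_sub_div {a b : ℝ} (hg : IntegrableOn g (Ioc a b)) (w : ℝ) :
    IntegrableOn (fun t => g t * (1 - t / w)) (Ioc a b) :=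
  hg.mul_continuousOn_of_subset (by fun_prop) measurableSet_Ioc isCompact_Icc Ioc_subset_Icc_self

lemma setIntegral_mul_one_sub_div_pos {w₁ w₂ : ℝ} (hw₁ : 0 ≤ w₁) (hlt : w₁ < w₂)
    (hg : IntegrableOn g (Ioc w₁ w₂)) (hpos : ∀ t, 0 < t → 0 < g t) :
    0 < ∫ t in Ioc w₁ w₂, g t * (1 - t / w₂) := by
  have hw₂ : 0 < w₂ := hw₁.trans_lt hlt
  have hnonneg : 0 ≤ᵐ[volume.restrict (Ioc w₁ w₂)] fun t => g t * (1 - t / w₂) := by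
    refine ae_restrict_of_forall_mem measurableSet_Ioc fun t ht => ?_
    have : t / w₂ ≤ 1 := (div_le_one hw₂).mpr ht.2
    exact mul_nonneg (hpos t (hw₁.trans_lt ht.1)).le (by linarith)
  rw [setIntegral_pos_iff_support_of_nonneg_ae hnonneg (hg.mul_one_sub_div w₂)]
  have hsupport : Ioo w₁ w₂ ⊆ Function.support (fun t => g t * (1 - t / w₂)) ∩ Ioc w₁ w₂ := by
    intro t ht
    have : t / w₂ < 1 := (div_lt_one hw₂).mpr ht.2
    exact ⟨(mul_pos (hpos t (hw₁.trans_lt ht.1)) (by linarith)).ne', Ioo_subset_Ioc_self ht⟩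
  calc (0 : ENNReal) < volume (Ioo w₁ w₂) := by simpa [Real.volume_Ioo] using hlt
    _ ≤ _ := measure_mono hsupport

theorem strictMonoOn_setIntegral_mul_one_sub_div (hg : ∀ w, IntegrableOn g (Ioc 0 w))
    (hpos : ∀ t, 0 < t → 0 < g t) :
    StrictMonoOn (fun w => ∫ t in Ioc 0 w, g t * (1 - t / w)) (Ioi 0) := by
  intro w₁ hw₁ w₂ _ hlt
  have hg₁ : IntegrableOn g (Ioc 0 w₁) := hg w₁
  have hg₁₂ : IntegrableOn g (Ioc w₁ w₂) := (hg w₂).mono_set (Ioc_subset_Ioc_left hw₁.out.le)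
  have hweight : ∫ t in Ioc 0 w₁, g t * (1 - t / w₁) ≤ ∫ t in Ioc 0 w₁, g t * (1 - t / w₂) := by
    refine setIntegral_mono_on (hg₁.mul_one_sub_div w₁) (hg₁.mul_one_sub_div w₂)
      measurableSet_Ioc fun t ht => mul_le_mul_of_nonneg_left ?_ (hpos t ht.1).le
    have : t / w₂ ≤ t / w₁ := div_le_div_of_nonneg_left ht.1.le hw₁ hlt.le
    linarith
  have hsplit : ∫ t in Ioc 0 w₂, g t * (1 - t / w₂)
      = (∫ t in Ioc 0 w₁, g t * (1 - t / w₂)) + ∫ t in Ioc w₁ w₂, g t * (1 - t / w₂) := by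
    rw [← setIntegral_union (Ioc_disjoint_Ioc_of_le le_rfl) measurableSet_Ioc
      (hg₁.mul_one_sub_div w₂) (hg₁₂.mul_one_sub_div w₂), Ioc_union_Ioc_eq_Ioc hw₁.out.le hlt.le]
  have htail := setIntegral_mul_one_sub_div_pos hw₁.out.le hlt hg₁₂ hpos
  change _ < ∫ t in Ioc 0 w₂, g t * (1 - t / w₂)
  linarith

end

/-- The random-offset collision probability is strictly increasing in the bin width w. -/
theorem stmt6 (d : ℝ) (hd : 0 < d) :
    StrictMonoOn
      (fun w : ℝ => ∫ t in Set.Ioc (0 : ℝ) w,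
        (2 / Real.sqrt d) * stdPdf (t / Real.sqrt d) * (1 - t / w))
      (Set.Ioi (0 : ℝ)) := by
  have hsd : 0 < Real.sqrt d := Real.sqrt_pos.mpr hd
  refine strictMonoOn_setIntegral_mul_one_sub_div (fun w => Continuous.integrableOn_Ioc ?_)
    fun t _ => mul_pos (by positivity) (stdPdf_pos _)
  exact continuous_const.mul (continuous_stdPdf.comp (continuous_id.div_const _))
end

section
/- Fix w > 0. The function d ↦ P_{w,q}(d) = ∫_0^w (2/√d) φ(t/√d)(1 - t/w) dt is strictly decreasing in d on (0, ∞). Equivalently, writing d = 2(1-ρ), the collision probability is strictly increasing in the correlation ρ ∈ (-1, 1). -/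
open MeasureTheory ProbabilityTheory Real Set

section Tent

variable {f : ℝ → ℝ} {w s s₁ s₂ x : ℝ}

lemma tent_le_tent (hw : 0 < w) (hx : 0 ≤ x) (h : s₁ ≤ s₂) :
    max 0 (1 - s₂ * x / w) ≤ max 0 (1 - s₁ * x / w) :=
  max_le_max le_rfl (by gcongr)

lemma tent_lt_tent (hw : 0 < w) (hs₁ : 0 < s₁) (hx : x ∈ Ioo 0 (w / s₁)) (h : s₁ < s₂) :
    max 0 (1 - s₂ * x / w) < max 0 (1 - s₁ * x / w) := by
  have hpos : 0 < 1 - s₁ * x / w := by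
    rw [sub_pos, div_lt_one hw]
    exact (lt_div_iff₀' hs₁).mp hx.2
  have hlt : 1 - s₂ * x / w < 1 - s₁ * x / w := by
    gcongr
    exact hx.1
  exact (max_lt hpos hlt).trans_le (le_max_right _ _)

lemma integrableOn_mul_tent (hf : IntegrableOn f (Ioi 0)) (hw : 0 < w) (hs : 0 ≤ s) :
    IntegrableOn (fun x => f x * max 0 (1 - s * x / w)) (Ioi 0) := by
  refine hf.mul_bdd (c := 1) (by fun_prop) ?_
  filter_upwards [self_mem_ae_restrict measurableSet_Ioi] with x hx
  have hsx : 0 ≤ s * x / w := div_nonneg (mul_nonneg hs (le_of_lt hx)) hw.le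
  rw [Real.norm_of_nonneg (le_max_left _ _)]
  exact max_le zero_le_one (by linarith)

lemma integral_Ioc_rescale_mul_tent (hw : 0 < w) (hs : 0 < s) :
    ∫ t in Ioc 0 w, s⁻¹ * f (t / s) * (1 - t / w) =
      ∫ x in Ioi 0, f x * max 0 (1 - s * x / w) := by
  have hws : 0 < w / s := by positivity
  calc ∫ t in Ioc 0 w, s⁻¹ * f (t / s) * (1 - t / w)
      = ∫ x in Ioc 0 (w / s), f x * (1 - s * x / w) := by
        rw [← intervalIntegral.integral_of_le hw.le, ← intervalIntegral.integral_of_le hws.le]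
        have hsubst := intervalIntegral.inv_smul_integral_comp_div (a := 0) (b := w)
          (f := fun x => f x * (1 - s * x / w)) s
        rw [zero_div, smul_eq_mul, ← intervalIntegral.integral_const_mul] at hsubst
        rw [← hsubst]
        refine intervalIntegral.integral_congr fun t _ => ?_
        simp only [mul_div_cancel₀ t hs.ne', mul_assoc]
    _ = ∫ x in Ioc 0 (w / s), f x * max 0 (1 - s * x / w) := by
        refine setIntegral_congr_fun measurableSet_Ioc fun x hx => ?_
        have hle : s * x / w ≤ 1 := by
          rw [div_le_one hw]
          exact (le_div_iff₀' hs).mp hx.2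
        rw [max_eq_right (by linarith)]
    _ = ∫ x in Ioi 0, f x * max 0 (1 - s * x / w) := by
        refine (setIntegral_eq_of_subset_of_forall_sdiff_eq_zero measurableSet_Ioi
          Ioc_subset_Ioi_self fun x hx => ?_).symm
        have hge : 1 ≤ s * x / w := by
          rw [one_le_div hw]
          exact ((div_lt_iff₀' hs).mp (not_le.mp fun h => hx.2 ⟨hx.1, h⟩)).le
        rw [max_eq_left (by linarith), mul_zero]

lemma strictAntiOn_integral_mul_tent (hf : IntegrableOn f (Ioi 0))
    (hf_pos : ∀ x ∈ Ioi 0, 0 < f x) (hw : 0 < w) :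
    StrictAntiOn (fun s => ∫ x in Ioi 0, f x * max 0 (1 - s * x / w)) (Ioi 0) := by
  intro s₁ (hs₁ : 0 < s₁) s₂ (hs₂ : 0 < s₂) h
  have hint₁ := integrableOn_mul_tent hf hw hs₁.le
  have hint₂ := integrableOn_mul_tent hf hw hs₂.le
  dsimp only
  rw [← sub_pos, ← integral_sub hint₁ hint₂, setIntegral_pos_iff_support_of_nonneg_ae]
  · have hsupp : Ioo 0 (w / s₁) ⊆ Function.support (fun x => f x * max 0 (1 - s₁ * x / w) -
        f x * max 0 (1 - s₂ * x / w)) ∩ Ioi 0 := fun x hx => by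
      refine ⟨ne_of_gt ?_, hx.1⟩
      show 0 < f x * _ - f x * _
      rw [← mul_sub]
      exact mul_pos (hf_pos x hx.1) (sub_pos.mpr (tent_lt_tent hw hs₁ hx h))
    exact ((Measure.measure_Ioo_pos volume).mpr (by positivity)).trans_le (measure_mono hsupp)
  · filter_upwards [self_mem_ae_restrict measurableSet_Ioi] with x hx
    rw [Pi.zero_apply, ← mul_sub]
    exact mul_nonneg (hf_pos x hx).le (sub_nonneg.mpr (tent_le_tent hw (le_of_lt hx) h.le))
  · exact hint₁.sub hint₂

end Tent

/-- For fixed w, the random-offset collision probability is strictly decreasing in the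
squared distance d; equivalently strictly increasing in the correlation ρ with d = 2(1-ρ). -/
theorem stmt7 (w : ℝ) (hw : 0 < w) :
    StrictAntiOn
      (fun d : ℝ => ∫ t in Set.Ioc (0 : ℝ) w,
        (2 / Real.sqrt d) * stdPdf (t / Real.sqrt d) * (1 - t / w))
      (Set.Ioi (0 : ℝ)) ∧
    StrictMonoOn
      (fun ρ : ℝ => ∫ t in Set.Ioc (0 : ℝ) w,
        (2 / Real.sqrt (2 * (1 - ρ))) * stdPdf (t / Real.sqrt (2 * (1 - ρ))) * (1 - t / w))
      (Set.Ioo (-1 : ℝ) 1) := by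
  have hscale : StrictAntiOn
      (fun s => ∫ x in Ioi 0, 2 * stdPdf x * max 0 (1 - s * x / w)) (Ioi 0) :=
    strictAntiOn_integral_mul_tent (integrable_stdPdf.const_mul 2).integrableOn
      (fun x _ => mul_pos two_pos (stdPdf_pos x)) hw
  have hrescale (s : ℝ) (hs : 0 < s) :
      ∫ t in Ioc 0 w, (2 / s) * stdPdf (t / s) * (1 - t / w) =
        ∫ x in Ioi 0, 2 * stdPdf x * max 0 (1 - s * x / w) := by
    rw [← integral_Ioc_rescale_mul_tent (f := fun x => 2 * stdPdf x) hw hs]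
    congr! 2 with t
    ring
  have hdist : StrictAntiOn
      (fun d : ℝ => ∫ t in Ioc 0 w, (2 / √d) * stdPdf (t / √d) * (1 - t / w)) (Ioi 0) := by
    intro d₁ hd₁ d₂ hd₂ h
    have hsqrt₁ := Real.sqrt_pos.mpr hd₁
    have hsqrt₂ := Real.sqrt_pos.mpr hd₂
    simp only [hrescale _ hsqrt₁, hrescale _ hsqrt₂]
    exact hscale hsqrt₁ hsqrt₂ (Real.sqrt_lt_sqrt (le_of_lt hd₁) h)
  refine ⟨hdist, fun ρ₁ hρ₁ ρ₂ hρ₂ h => hdist ?_ ?_ (by linarith)⟩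
  · show 0 < 2 * (1 - ρ₂)
    linarith [hρ₂.2]
  · show 0 < 2 * (1 - ρ₁)
    linarith [hρ₁.2]
end

section
/- Let (X, Y) be bivariate normal with mean zero, unit variances, and correlation ρ, where 0 ≤ ρ < 1. For any fixed w > 0, the collision probability P_w(ρ) = P(⌊X/w⌋ = ⌊Y/w⌋) is a monotonically increasing function of ρ on [0, 1), and P_w(ρ) → 1 as ρ → 1⁻. -/
open MeasureTheory ProbabilityTheory Real Set

/-!
Write `Y = ρ X + √(1 - ρ²) Z` with `X, Z` independent standard normals, and let
`U_ρ f (x) = E f (ρ x + √(1 - ρ²) Z)` be the Ornstein–Uhlenbeck operator, so that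
`P(X ∈ A, Y ∈ A) = ⟨1_A, U_ρ 1_A⟩` in `L²(γ)`. Invariance of the standard Gaussian on `ℝ²` under
orthogonal maps makes `(U_ρ)` a self-adjoint semigroup (`U_a U_b = U_{ab}`) of `L²`-contractions.
Hence for `ρ = s²` we get `⟨f, U_ρ f⟩ = ‖U_s f‖²`, and for `s₁ ≤ s₂`,
`‖U_{s₁} f‖ = ‖U_{s₁/s₂} U_{s₂} f‖ ≤ ‖U_{s₂} f‖`. Summing over the quantization cells
`{⌊x / w⌋ = k}` gives monotonicity. As `ρ → 1`, `Y → X` pointwise, and `x ↦ ⌊x / w⌋` is locally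
constant outside the null set `wℤ`, so by dominated convergence the collision probability
tends to 1.
-/

open Filter Topology

local notation "γ" => gaussianReal 0 1
local notation "γ₂" => Measure.prod (gaussianReal 0 1) (gaussianReal 0 1)

lemma charFunDual_gaussianReal_prod (L : StrongDual ℝ (ℝ × ℝ)) :
    charFunDual γ₂ L = Complex.exp ((-((L (1, 0)) ^ 2 + (L (0, 1)) ^ 2) / 2 : ℝ)) := by
  have hcharFun (L' : StrongDual ℝ ℝ) : charFunDual γ L' = Complex.exp (-(L' 1) ^ 2 / 2) := by
    rw [charFunDual_eq_charFun_map_one, gaussianReal_map_continuousLinearMap, charFun_gaussianReal]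
    congr 1
    simp only [map_zero, Complex.ofReal_zero, mul_zero, zero_mul, zero_sub,
      Real.coe_toNNReal _ (sq_nonneg _), Complex.ofReal_pow, Complex.ofReal_one, one_pow, mul_one]
    ring
  rw [charFunDual_prod, hcharFun, hcharFun, ← Complex.exp_add]
  congr 1
  simp only [ContinuousLinearMap.comp_apply, ContinuousLinearMap.inl_apply,
    ContinuousLinearMap.inr_apply]
  push_cast
  ring

lemma measurePreserving_gaussianReal_prod_of_orthonormal {a b c d : ℝ}
    (hab : a ^ 2 + b ^ 2 = 1) (hcd : c ^ 2 + d ^ 2 = 1) (horth : a * c + b * d = 0) :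
    MeasurePreserving (fun p : ℝ × ℝ => (a * p.1 + b * p.2, c * p.1 + d * p.2)) γ₂ γ₂ := by
  let A : ℝ × ℝ →L[ℝ] ℝ × ℝ :=
    (a • ContinuousLinearMap.fst ℝ ℝ ℝ + b • ContinuousLinearMap.snd ℝ ℝ ℝ).prod
      (c • ContinuousLinearMap.fst ℝ ℝ ℝ + d • ContinuousLinearMap.snd ℝ ℝ ℝ)
  have hA : ⇑A = fun p : ℝ × ℝ => (a * p.1 + b * p.2, c * p.1 + d * p.2) := by
    ext p <;> simp [A]
  refine ⟨by fun_prop, ?_⟩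
  rw [← hA]
  refine Measure.ext_of_charFunDual (funext fun L => ?_)
  rw [charFunDual_map, charFunDual_gaussianReal_prod, charFunDual_gaussianReal_prod]
  congr 3
  have hL (x y : ℝ) : L (x, y) = x * L (1, 0) + y * L (0, 1) := by
    rw [← smul_eq_mul, ← smul_eq_mul, ← map_smul, ← map_smul, ← map_add]; simp
  simp only [ContinuousLinearMap.comp_apply, hA]
  rw [hL (a * 1 + b * 0), hL (a * 0 + b * 1)]
  linear_combination
    -(L (1, 0)) ^ 2 * hab - (L (0, 1)) ^ 2 * hcd - 2 * L (1, 0) * L (0, 1) * horth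

lemma gaussianReal_prod_map_linComb {a b : ℝ} (hab : a ^ 2 + b ^ 2 = 1) :
    Measure.map (fun p : ℝ × ℝ => a * p.1 + b * p.2) γ₂ = γ := by
  have hrot := measurePreserving_gaussianReal_prod_of_orthonormal hab
    (by linear_combination hab : (-b) ^ 2 + a ^ 2 = 1) (by ring : a * -b + b * a = 0)
  rw [show (fun p : ℝ × ℝ => a * p.1 + b * p.2)
      = Prod.fst ∘ fun p : ℝ × ℝ => (a * p.1 + b * p.2, -b * p.1 + a * p.2) from rfl,
    ← Measure.map_map measurable_fst hrot.measurable, hrot.map_eq, Measure.map_fst_prod,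
    measure_univ, one_smul]

lemma integral_gaussianReal_prod_linComb {g : ℝ → ℝ} (hg : Measurable g) (a b : ℝ) :
    ∫ p, g (a * p.1 + b * p.2) ∂γ₂ = ∫ u, g (√(a ^ 2 + b ^ 2) * u) ∂γ := by
  set r := √(a ^ 2 + b ^ 2)
  rcases eq_or_ne r 0 with hr | hr
  · have ha : a = 0 := by nlinarith [Real.sqrt_eq_zero'.1 hr, sq_nonneg a, sq_nonneg b]
    have hb : b = 0 := by nlinarith [Real.sqrt_eq_zero'.1 hr, sq_nonneg a, sq_nonneg b]
    simp [ha, hb, hr]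
  have hunit : (a / r) ^ 2 + (b / r) ^ 2 = 1 := by
    rw [div_pow, div_pow, ← add_div, div_eq_one_iff_eq (pow_ne_zero 2 hr),
      Real.sq_sqrt (by positivity)]
  calc ∫ p, g (a * p.1 + b * p.2) ∂γ₂
      = ∫ p, (fun u => g (r * u)) ((a / r) * p.1 + (b / r) * p.2) ∂γ₂ := by
        congr with p
        field_simp
    _ = ∫ u, g (r * u) ∂γ := by
        rw [← integral_map (f := fun u => g (r * u)) (by fun_prop)
          (hg.comp (measurable_const_mul r)).aestronglyMeasurable,
          gaussianReal_prod_map_linComb hunit]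

lemma Measurable.integrable_of_abs_le {α : Type*} [MeasurableSpace α] {μ : Measure α}
    [IsFiniteMeasure μ] {f : α → ℝ} {C : ℝ} (hf : Measurable f) (hfC : ∀ x, |f x| ≤ C) :
    Integrable f μ :=
  .of_bound hf.aestronglyMeasurable C (ae_of_all _ hfC)

lemma abs_sq_le_sq_of_abs_le {a C : ℝ} (h : |a| ≤ C) : |a ^ 2| ≤ C ^ 2 := by
  rw [abs_pow]
  exact pow_le_pow_left₀ (abs_nonneg a) h 2

/-- Mehler's form of the Ornstein–Uhlenbeck semigroup, with time parameter `ρ = e^{-t}`. -/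
noncomputable def ornsteinUhlenbeck (ρ : ℝ) (f : ℝ → ℝ) (x : ℝ) : ℝ :=
  ∫ z, f (ρ * x + √(1 - ρ ^ 2) * z) ∂γ

section OrnsteinUhlenbeck

variable {f g : ℝ → ℝ} {C D : ℝ}

lemma measurable_ornsteinUhlenbeck (ρ : ℝ) (hf : Measurable f) :
    Measurable (ornsteinUhlenbeck ρ f) :=
  (StronglyMeasurable.integral_prod_right'
    (f := fun q : ℝ × ℝ => f (ρ * q.1 + √(1 - ρ ^ 2) * q.2))
    (hf.comp (by fun_prop)).stronglyMeasurable).measurable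

lemma abs_ornsteinUhlenbeck_le (ρ : ℝ) (hfC : ∀ x, |f x| ≤ C) (x : ℝ) :
    |ornsteinUhlenbeck ρ f x| ≤ C := by
  simpa [ornsteinUhlenbeck] using norm_integral_le_of_norm_le_const (μ := γ)
    (f := fun z => f (ρ * x + √(1 - ρ ^ 2) * z)) (ae_of_all _ fun z => hfC _)

lemma ornsteinUhlenbeck_ornsteinUhlenbeck (hf : Measurable f) (hfC : ∀ x, |f x| ≤ C)
    {a b : ℝ} (ha : a ^ 2 ≤ 1) (hb : b ^ 2 ≤ 1) :
    ornsteinUhlenbeck a (ornsteinUhlenbeck b f) = ornsteinUhlenbeck (a * b) f := by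
  funext x
  have hint : Integrable (fun p : ℝ × ℝ =>
      f (a * b * x + (b * √(1 - a ^ 2) * p.1 + √(1 - b ^ 2) * p.2))) γ₂ :=
    (hf.comp (by fun_prop)).integrable_of_abs_le fun _ => hfC _
  have hvar : (b * √(1 - a ^ 2)) ^ 2 + √(1 - b ^ 2) ^ 2 = 1 - (a * b) ^ 2 := by
    rw [mul_pow, Real.sq_sqrt (by linarith), Real.sq_sqrt (by linarith)]; ring
  calc ornsteinUhlenbeck a (ornsteinUhlenbeck b f) x
      = ∫ z, ∫ u, f (a * b * x + (b * √(1 - a ^ 2) * z + √(1 - b ^ 2) * u)) ∂γ ∂γ := by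
        simp only [ornsteinUhlenbeck]
        congr with z; congr with u; ring_nf
    _ = ∫ p, f (a * b * x + (b * √(1 - a ^ 2) * p.1 + √(1 - b ^ 2) * p.2)) ∂γ₂ :=
        integral_integral hint
    _ = ornsteinUhlenbeck (a * b) f x := by
        rw [integral_gaussianReal_prod_linComb (g := fun y => f (a * b * x + y))
          (hf.comp (by fun_prop)), hvar]
        rfl

lemma integral_ornsteinUhlenbeck (hf : Measurable f) (hfC : ∀ x, |f x| ≤ C) {ρ : ℝ}
    (hρ : ρ ^ 2 ≤ 1) : ∫ x, ornsteinUhlenbeck ρ f x ∂γ = ∫ x, f x ∂γ := by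
  have hint : Integrable (fun p : ℝ × ℝ => f (ρ * p.1 + √(1 - ρ ^ 2) * p.2)) γ₂ :=
    (hf.comp (by fun_prop)).integrable_of_abs_le fun _ => hfC _
  simp only [ornsteinUhlenbeck]
  rw [integral_integral hint, integral_gaussianReal_prod_linComb hf,
    Real.sq_sqrt (by linarith)]
  simp

lemma integral_mul_ornsteinUhlenbeck (hf : Measurable f) (hfC : ∀ x, |f x| ≤ C)
    (hg : Measurable g) (hgD : ∀ x, |g x| ≤ D) (ρ : ℝ) :
    ∫ x, f x * ornsteinUhlenbeck ρ g x ∂γ = ∫ p, f p.1 * g (ρ * p.1 + √(1 - ρ ^ 2) * p.2) ∂γ₂ := by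
  have hint : Integrable (fun p : ℝ × ℝ => f p.1 * g (ρ * p.1 + √(1 - ρ ^ 2) * p.2)) γ₂ :=
    ((hg.comp (by fun_prop)).integrable_of_abs_le fun _ => hgD _).bdd_mul
      (hf.comp measurable_fst).aestronglyMeasurable (ae_of_all _ fun p => hfC p.1)
  rw [integral_prod _ hint]
  congr with x
  rw [ornsteinUhlenbeck, ← integral_const_mul]

lemma integral_mul_ornsteinUhlenbeck_comm (hf : Measurable f) (hfC : ∀ x, |f x| ≤ C)
    (hg : Measurable g) (hgD : ∀ x, |g x| ≤ D) {ρ : ℝ} (hρ : ρ ^ 2 ≤ 1) :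
    ∫ x, f x * ornsteinUhlenbeck ρ g x ∂γ = ∫ x, ornsteinUhlenbeck ρ f x * g x ∂γ := by
  have hc : √(1 - ρ ^ 2) ^ 2 = 1 - ρ ^ 2 := Real.sq_sqrt (by linarith)
  -- this reflection of the plane exchanges `x` and `ρ x + √(1 - ρ²) z`
  have hrefl := measurePreserving_gaussianReal_prod_of_orthonormal (a := ρ) (b := √(1 - ρ ^ 2))
    (c := √(1 - ρ ^ 2)) (d := -ρ) (by linarith) (by linarith) (by ring)
  simp_rw [mul_comm (ornsteinUhlenbeck ρ f _)]
  rw [integral_mul_ornsteinUhlenbeck hf hfC hg hgD, integral_mul_ornsteinUhlenbeck hg hgD hf hfC]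
  nth_rw 1 [← hrefl.map_eq]
  rw [integral_map hrefl.measurable.aemeasurable (by fun_prop)]
  congr with p
  rw [mul_comm]
  congr 2
  linear_combination p.1 * hc

lemma sq_ornsteinUhlenbeck_le (hf : Measurable f) (hfC : ∀ x, |f x| ≤ C) (ρ x : ℝ) :
    ornsteinUhlenbeck ρ f x ^ 2 ≤ ornsteinUhlenbeck ρ (fun y => f y ^ 2) x := by
  have hmem : MemLp (fun z => f (ρ * x + √(1 - ρ ^ 2) * z)) 2 γ :=
    .of_bound (hf.comp (by fun_prop)).aestronglyMeasurable C (ae_of_all _ fun _ => hfC _)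
  have hvar := variance_eq_sub hmem
  have := variance_nonneg (fun z => f (ρ * x + √(1 - ρ ^ 2) * z)) γ
  simp only [Pi.pow_apply] at hvar
  simp only [ornsteinUhlenbeck]
  linarith

lemma integral_sq_ornsteinUhlenbeck_le (hf : Measurable f) (hfC : ∀ x, |f x| ≤ C) {ρ : ℝ}
    (hρ : ρ ^ 2 ≤ 1) : ∫ x, ornsteinUhlenbeck ρ f x ^ 2 ∂γ ≤ ∫ x, f x ^ 2 ∂γ := by
  have hf2 : Measurable fun y => f y ^ 2 := hf.pow_const 2
  have hf2C (y : ℝ) : |f y ^ 2| ≤ C ^ 2 := abs_sq_le_sq_of_abs_le (hfC y)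
  calc ∫ x, ornsteinUhlenbeck ρ f x ^ 2 ∂γ
      ≤ ∫ x, ornsteinUhlenbeck ρ (fun y => f y ^ 2) x ∂γ :=
        integral_mono (((measurable_ornsteinUhlenbeck ρ hf).pow_const 2).integrable_of_abs_le
            fun x => abs_sq_le_sq_of_abs_le (abs_ornsteinUhlenbeck_le ρ hfC x))
          ((measurable_ornsteinUhlenbeck ρ hf2).integrable_of_abs_le
            (abs_ornsteinUhlenbeck_le ρ hf2C))
          (sq_ornsteinUhlenbeck_le hf hfC ρ)
    _ = ∫ x, f x ^ 2 ∂γ := integral_ornsteinUhlenbeck hf2 hf2C hρ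

lemma integral_mul_ornsteinUhlenbeck_sq (hf : Measurable f) (hfC : ∀ x, |f x| ≤ C) {s : ℝ}
    (hs : s ^ 2 ≤ 1) :
    ∫ x, f x * ornsteinUhlenbeck (s ^ 2) f x ∂γ = ∫ x, ornsteinUhlenbeck s f x ^ 2 ∂γ := by
  rw [sq s, ← ornsteinUhlenbeck_ornsteinUhlenbeck hf hfC hs hs,
    integral_mul_ornsteinUhlenbeck_comm hf hfC (measurable_ornsteinUhlenbeck s hf)
      (abs_ornsteinUhlenbeck_le s hfC) hs]
  simp only [sq]

theorem monotoneOn_integral_mul_ornsteinUhlenbeck (hf : Measurable f) (hfC : ∀ x, |f x| ≤ C) :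
    MonotoneOn (fun ρ => ∫ x, f x * ornsteinUhlenbeck ρ f x ∂γ) (Icc 0 1) := by
  rintro ρ₁ ⟨hρ₁, -⟩ ρ₂ ⟨hρ₂, hρ₂_le⟩ hle
  rcases hρ₂.eq_or_lt with rfl | hρ₂
  · rw [le_antisymm hle hρ₁]
  set s₁ := √ρ₁
  set s₂ := √ρ₂
  have hs₂ : 0 < s₂ := Real.sqrt_pos.2 hρ₂
  have hs₂sq : s₂ ^ 2 = ρ₂ := Real.sq_sqrt hρ₂.le
  have hs₁sq : s₁ ^ 2 = ρ₁ := Real.sq_sqrt hρ₁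
  have hr : (s₁ / s₂) ^ 2 ≤ 1 := by
    rw [div_pow, hs₁sq, hs₂sq, div_le_one hρ₂]; exact hle
  calc ∫ x, f x * ornsteinUhlenbeck ρ₁ f x ∂γ
      = ∫ x, ornsteinUhlenbeck (s₁ / s₂) (ornsteinUhlenbeck s₂ f) x ^ 2 ∂γ := by
        rw [ornsteinUhlenbeck_ornsteinUhlenbeck hf hfC hr (by linarith), div_mul_cancel₀ _ hs₂.ne',
          ← integral_mul_ornsteinUhlenbeck_sq hf hfC (by linarith), hs₁sq]
    _ ≤ ∫ x, ornsteinUhlenbeck s₂ f x ^ 2 ∂γ :=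
        integral_sq_ornsteinUhlenbeck_le (measurable_ornsteinUhlenbeck s₂ hf)
          (abs_ornsteinUhlenbeck_le s₂ hfC) hr
    _ = ∫ x, f x * ornsteinUhlenbeck ρ₂ f x ∂γ := by
        rw [← integral_mul_ornsteinUhlenbeck_sq hf hfC (by linarith), hs₂sq]

end OrnsteinUhlenbeck

lemma abs_indicator_one_le (A : Set ℝ) (x : ℝ) : |A.indicator (1 : ℝ → ℝ) x| ≤ 1 := by
  by_cases hx : x ∈ A <;> simp [hx]

noncomputable def correlatedPair (ρ : ℝ) (p : ℝ × ℝ) : ℝ × ℝ := (p.1, ρ * p.1 + √(1 - ρ ^ 2) * p.2)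

lemma measurable_correlatedPair (ρ : ℝ) : Measurable (correlatedPair ρ) := by
  unfold correlatedPair; fun_prop

lemma measureReal_correlatedPair_preimage_prod_self {A : Set ℝ} (hA : MeasurableSet A) (ρ : ℝ) :
    Measure.real γ₂ (correlatedPair ρ ⁻¹' A ×ˢ A)
      = ∫ x, A.indicator 1 x * ornsteinUhlenbeck ρ (A.indicator 1) x ∂γ := by
  rw [integral_mul_ornsteinUhlenbeck (measurable_one.indicator hA) (abs_indicator_one_le A)
      (measurable_one.indicator hA) (abs_indicator_one_le A),
    ← integral_indicator_one ((measurable_correlatedPair ρ) (hA.prod hA))]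
  congr with p
  rw [← Set.indicator_comp_right]
  exact Set.indicator_prod_one

section Quantizer

variable {ι : Type*} [Countable ι] [MeasurableSpace ι] [MeasurableSingletonClass ι] {q : ℝ → ι}

theorem monotoneOn_measure_correlatedPair_preimage_eq (hq : Measurable q) :
    MonotoneOn (fun ρ => γ₂ (correlatedPair ρ ⁻¹' {z | q z.1 = q z.2})) (Icc 0 1) := by
  have hcell (k : ι) : MeasurableSet (q ⁻¹' {k}) := hq (measurableSet_singleton k)
  have hunion : {z : ℝ × ℝ | q z.1 = q z.2} = ⋃ k, (q ⁻¹' {k}) ×ˢ (q ⁻¹' {k}) := by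
    ext z; simp [eq_comm]
  have hsum (ρ : ℝ) : γ₂ (correlatedPair ρ ⁻¹' {z | q z.1 = q z.2})
      = ∑' k, γ₂ (correlatedPair ρ ⁻¹' (q ⁻¹' {k}) ×ˢ (q ⁻¹' {k})) := by
    rw [hunion, Set.preimage_iUnion, measure_iUnion]
    · exact fun k l hkl =>
        (((Set.disjoint_singleton.2 hkl).preimage q).set_prod_left _ _).preimage _
    · exact fun k => measurable_correlatedPair ρ ((hcell k).prod (hcell k))
  intro ρ₁ hρ₁ ρ₂ hρ₂ hle
  simp only [hsum]
  refine ENNReal.tsum_le_tsum fun k => ?_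
  rw [← ENNReal.toReal_le_toReal (measure_ne_top _ _) (measure_ne_top _ _), ← measureReal_def,
    ← measureReal_def, measureReal_correlatedPair_preimage_prod_self (hcell k),
    measureReal_correlatedPair_preimage_prod_self (hcell k)]
  exact monotoneOn_integral_mul_ornsteinUhlenbeck (measurable_one.indicator (hcell k))
    (abs_indicator_one_le _) hρ₁ hρ₂ hle

theorem tendsto_measure_correlatedPair_preimage_eq (hq : Measurable q)
    (hloc : ∀ᵐ x ∂γ, ∀ᶠ y in 𝓝 x, q y = q x) :
    Tendsto (fun ρ => γ₂ (correlatedPair ρ ⁻¹' {z | q z.1 = q z.2})) (𝓝 1) (𝓝 1) := by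
  have hset : MeasurableSet {z : ℝ × ℝ | q z.1 = q z.2} :=
    measurableSet_eq_fun (hq.comp measurable_fst) (hq.comp measurable_snd)
  have hlim : ∀ᵐ p ∂γ₂, ∀ᶠ ρ in 𝓝 1, p ∈ correlatedPair ρ ⁻¹' {z | q z.1 = q z.2} ↔ p ∈ univ := by
    filter_upwards [measurePreserving_fst.quasiMeasurePreserving.ae hloc] with p hp
    have hY : Tendsto (fun ρ : ℝ => ρ * p.1 + √(1 - ρ ^ 2) * p.2) (𝓝 1) (𝓝 p.1) := by
      have hc : Continuous fun ρ : ℝ => ρ * p.1 + √(1 - ρ ^ 2) * p.2 := by fun_prop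
      simpa using hc.tendsto 1
    filter_upwards [hY.eventually hp] with ρ hρ
    simp [correlatedPair, hρ]
  simpa using tendsto_measure_of_ae_tendsto_indicator_of_isFiniteMeasure (𝓝 1) MeasurableSet.univ
    (fun ρ => measurable_correlatedPair ρ hset) hlim

end Quantizer

lemma ae_eventually_floor_div_eq {μ : Measure ℝ} [NullSingletonClass μ] (w : ℝ) :
    ∀ᵐ x ∂μ, ∀ᶠ y in 𝓝 x, ⌊y / w⌋ = ⌊x / w⌋ := by
  filter_upwards [measure_eq_zero_iff_ae_notMem.1
    ((Set.countable_range fun k : ℤ => k * w).measure_zero μ)] with x hx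
  rcases eq_or_ne w 0 with rfl | hw
  · simp -- `y / 0 = 0` for every `y`
  have hlt : (⌊x / w⌋ : ℝ) < x / w :=
    (Int.floor_le _).lt_of_ne fun h => hx ⟨⌊x / w⌋, by simp only [h]; field_simp⟩
  have hfloor : ∀ᶠ t in 𝓝 (x / w), ⌊t⌋ = ⌊x / w⌋ := by
    filter_upwards [Ioo_mem_nhds hlt (Int.lt_floor_add_one _)] with t ht
    exact Int.floor_eq_iff.2 ⟨ht.1.le, ht.2⟩
  exact ((continuous_id.div_const w).tendsto x).eventually hfloor

theorem stmt11_general (w : ℝ) :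
    MonotoneOn
      (fun ρ : ℝ => (((gaussianReal 0 1).prod (gaussianReal 0 1))
        {p : ℝ × ℝ | ⌊p.1 / w⌋ = ⌊(ρ * p.1 + Real.sqrt (1 - ρ ^ 2) * p.2) / w⌋}).toReal)
      (Set.Ico (0 : ℝ) 1) ∧
    Filter.Tendsto
      (fun ρ : ℝ => (((gaussianReal 0 1).prod (gaussianReal 0 1))
        {p : ℝ × ℝ | ⌊p.1 / w⌋ = ⌊(ρ * p.1 + Real.sqrt (1 - ρ ^ 2) * p.2) / w⌋}).toReal)
      (nhdsWithin 1 (Set.Iio 1)) (nhds 1) := by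
  have hq : Measurable fun x : ℝ => ⌊x / w⌋ := by fun_prop
  have := nullSingletonClass_gaussianReal (μ := 0) one_ne_zero
  refine ⟨fun ρ₁ hρ₁ ρ₂ hρ₂ hle => ENNReal.toReal_mono (measure_ne_top _ _)
    (monotoneOn_measure_correlatedPair_preimage_eq hq (Ico_subset_Icc_self hρ₁)
      (Ico_subset_Icc_self hρ₂) hle), ?_⟩
  exact (ENNReal.tendsto_toReal ENNReal.one_ne_top).comp
    ((tendsto_measure_correlatedPair_preimage_eq hq (ae_eventually_floor_div_eq w)).mono_left
      nhdsWithin_le_nhds)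

/-- The collision probability of uniform quantization is monotone increasing in ρ on
[0,1) and tends to 1 as ρ → 1⁻. -/
theorem stmt11 (w : ℝ) (hw : 0 < w) :
    MonotoneOn
      (fun ρ : ℝ => (((gaussianReal 0 1).prod (gaussianReal 0 1))
        {p : ℝ × ℝ | ⌊p.1 / w⌋ = ⌊(ρ * p.1 + Real.sqrt (1 - ρ ^ 2) * p.2) / w⌋}).toReal)
      (Set.Ico (0 : ℝ) 1) ∧
    Filter.Tendsto
      (fun ρ : ℝ => (((gaussianReal 0 1).prod (gaussianReal 0 1))
        {p : ℝ × ℝ | ⌊p.1 / w⌋ = ⌊(ρ * p.1 + Real.sqrt (1 - ρ ^ 2) * p.2) / w⌋}).toReal)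
      (nhdsWithin 1 (Set.Iio 1)) (nhds 1) :=
  stmt11_general w
end

section
/- Let x, y ∈ ℝ with |x - y| = t and w > 0, and let Q ~ Uniform(0, w). If t < w then P(⌊(x+Q)/w⌋ = ⌊(y+Q)/w⌋) = 1 - t/w, and if t ≥ w then this probability is 0. -/
open MeasureTheory ProbabilityTheory Real Set

/-!
Shifting `q` by `w` adds `1` to both floors, so the collision event is `w`-periodic in `q` and its
measure on `(0, w)` equals its measure on any other period window. For `x = y + t` the event is
`fract ((y + q) / w) < 1 - t / w`, and on the window `[-y, -y + w)` the fractional part is just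
`(y + q) / w`, so the event there is an interval of length `max (w - t) 0`.
-/

theorem Int.floor_add_eq_floor_iff {R : Type*} [Ring R] [LinearOrder R] [IsStrictOrderedRing R]
    [FloorRing R] {a b : R} (hb : 0 ≤ b) : ⌊a + b⌋ = ⌊a⌋ ↔ Int.fract a + b < 1 := by
  rw [Int.floor_eq_iff, Int.fract, sub_add_eq_add_sub, sub_lt_iff_lt_add']
  exact and_iff_right ((Int.floor_le a).trans (le_add_of_nonneg_right hb))

theorem setOf_floor_add_div_eq_floor_div {w : ℝ} (hw : 0 < w) (y : ℝ) {t : ℝ} (ht : 0 ≤ t) :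
    {q : ℝ | ⌊(y + t + q) / w⌋ = ⌊(y + q) / w⌋} = {q | Int.fract ((y + q) / w) < 1 - t / w} := by
  ext q
  have hsplit : (y + t + q) / w = (y + q) / w + t / w := by ring
  simp only [mem_ofPred_eq, hsplit, Int.floor_add_eq_floor_iff (div_nonneg ht hw.le),
    lt_sub_iff_add_lt]

theorem measurableSet_setOf_fract_add_div_lt (y w c : ℝ) :
    MeasurableSet {q : ℝ | Int.fract ((y + q) / w) < c} :=
  measurableSet_lt (measurable_fract.comp (by fun_prop)) measurable_const

theorem periodic_mem_setOf_fract_add_div_lt {w : ℝ} (hw : w ≠ 0) (y c : ℝ) :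
    Function.Periodic (· ∈ {q : ℝ | Int.fract ((y + q) / w) < c}) w := by
  intro q
  have hshift : (y + (q + w)) / w = (y + q) / w + 1 := by field_simp; ring
  simp only [mem_ofPred_eq, hshift, Int.fract_add_one]

theorem volume_inter_Ioo_eq_inter_Ico_of_periodic {A : Set ℝ} {w : ℝ} (hw : 0 < w)
    (hA : MeasurableSet A) (hper : Function.Periodic (· ∈ A) w) (a b : ℝ) :
    volume (A ∩ Ioo a (a + w)) = volume (A ∩ Ico b (b + w)) := by
  have hinv : ∀ g : AddSubgroup.zmultiples w, (fun x => g +ᵥ x) ⁻¹' A = A := by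
    rintro ⟨_, n, rfl⟩
    ext x
    simpa [add_comm x] using (hper.zsmul n x).to_iff
  calc volume (A ∩ Ioo a (a + w)) = volume (A ∩ Ioc a (a + w)) :=
        measure_congr (ae_eq_set_inter (ae_eq_refl A) Ioo_ae_eq_Ioc)
    _ = volume (A ∩ Ioc b (b + w)) :=
        (isAddFundamentalDomain_Ioc hw a).measure_set_eq (isAddFundamentalDomain_Ioc hw b) hA hinv
    _ = volume (A ∩ Ico b (b + w)) :=
        measure_congr (ae_eq_set_inter (ae_eq_refl A) Ico_ae_eq_Ioc.symm)

theorem setOf_fract_add_div_lt_inter_Ico {w : ℝ} (hw : 0 < w) (y : ℝ) {c : ℝ} (hc : c ≤ 1) :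
    {q : ℝ | Int.fract ((y + q) / w) < c} ∩ Ico (-y) (-y + w) = Ico (-y) (-y + c * w) := by
  have hfract : ∀ q ∈ Ico (-y) (-y + w), Int.fract ((y + q) / w) = (y + q) / w := fun q hq =>
    Int.fract_eq_self.mpr ⟨div_nonneg (by linarith [hq.1]) hw.le,
      (div_lt_one hw).mpr (by linarith [hq.2])⟩
  ext q
  constructor
  · rintro ⟨h, hq⟩
    rw [mem_ofPred_eq, hfract q hq, div_lt_iff₀ hw] at h
    exact ⟨hq.1, by linarith⟩
  · rintro ⟨hq, hqc⟩
    have hq' : q ∈ Ico (-y) (-y + w) := ⟨hq, by nlinarith⟩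
    refine ⟨?_, hq'⟩
    rw [mem_ofPred_eq, hfract q hq', div_lt_iff₀ hw]
    linarith

theorem collision_probability_eq {x y t w : ℝ} (hw : 0 < w) (ht : |x - y| = t) :
    (((ENNReal.ofReal w)⁻¹ • volume.restrict (Ioo (0 : ℝ) w))
      {q : ℝ | ⌊(x + q) / w⌋ = ⌊(y + q) / w⌋}).toReal = max (1 - t / w) 0 := by
  wlog hyx : y ≤ x generalizing x y
  · have hset : {q : ℝ | ⌊(x + q) / w⌋ = ⌊(y + q) / w⌋} = {q | ⌊(y + q) / w⌋ = ⌊(x + q) / w⌋} :=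
      Set.ext fun q => eq_comm
    rw [hset]
    exact this (by rwa [abs_sub_comm]) (le_of_not_ge hyx)
  obtain rfl : x = y + t := by rw [← ht, abs_of_nonneg (sub_nonneg.mpr hyx)]; ring
  have ht0 : 0 ≤ t := ht ▸ abs_nonneg _
  have hc : 1 - t / w ≤ 1 := by linarith [div_nonneg ht0 hw.le]
  have hvol : volume ({q : ℝ | ⌊(y + t + q) / w⌋ = ⌊(y + q) / w⌋} ∩ Ioo 0 w)
      = ENNReal.ofReal ((1 - t / w) * w) := by
    have hshift := volume_inter_Ioo_eq_inter_Ico_of_periodic hw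
      (measurableSet_setOf_fract_add_div_lt y w (1 - t / w))
      (periodic_mem_setOf_fract_add_div_lt hw.ne' y (1 - t / w)) 0 (-y)
    rw [zero_add, setOf_fract_add_div_lt_inter_Ico hw y hc] at hshift
    rw [setOf_floor_add_div_eq_floor_div hw y ht0, hshift, Real.volume_Ico, add_sub_cancel_left]
  rw [Measure.smul_apply, Measure.restrict_apply' measurableSet_Ioo, hvol, smul_eq_mul,
    ENNReal.toReal_mul, ENNReal.toReal_inv, ENNReal.toReal_ofReal hw.le,
    ENNReal.toReal_ofReal', mul_max_of_nonneg _ _ (inv_nonneg.mpr hw.le), mul_zero,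
    mul_comm (1 - t / w), inv_mul_cancel_left₀ hw.ne']

/-- Offset-collision lemma: for fixed x, y with |x - y| = t and Q uniform on (0,w),
the collision probability is 1 - t/w if t < w, and 0 if t ≥ w. -/
theorem stmt15 (x y t w : ℝ) (hw : 0 < w) (ht : |x - y| = t) :
    (t < w →
      (((ENNReal.ofReal w)⁻¹ • volume.restrict (Set.Ioo (0 : ℝ) w))
        {q : ℝ | ⌊(x + q) / w⌋ = ⌊(y + q) / w⌋}).toReal = 1 - t / w) ∧
    (w ≤ t →
      (((ENNReal.ofReal w)⁻¹ • volume.restrict (Set.Ioo (0 : ℝ) w))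
        {q : ℝ | ⌊(x + q) / w⌋ = ⌊(y + q) / w⌋}).toReal = 0) := by
  rw [collision_probability_eq hw ht]
  refine ⟨fun htw => max_eq_left ?_, fun hwt => max_eq_right ?_⟩
  · rw [sub_nonneg, div_le_one hw]
    exact htw.le
  · rw [sub_nonpos, one_le_div hw]
    exact hwt
end
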